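/- For every coSafetyFO formula φ(x) with exactly one free variable: (i) L_fin(φ(x)) = L_fin(φ(x))·(2^Σ)^*, and (ii) L(φ(x)) = L_fin(φ(x))·(2^Σ)^ω. Consequently ⟦coSafetyFO⟧_fin = {L·(2^Σ)^* : L ∈ ⟦coSafetyFO⟧_fin} and ⟦coSafetyFO⟧ = {L·(2^Σ)^ω : L ∈ ⟦coSafetyFO⟧_fin}. -/

import Mathlib

namespace CoSafetyPaper

/-- LTL formulas in negation normal form over proposition letters `PL`. -/
inductive LTLF (PL : Type) : Type
  | pos : PL → LTLF PL                      -- p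
  | nneg : PL → LTLF PL                     -- ¬p
  | disj : LTLF PL → LTLF PL → LTLF PL      -- φ ∨ ψ
  | conj : LTLF PL → LTLF PL → LTLF PL      -- φ ∧ ψ
  | next : LTLF PL → LTLF PL                -- X φ
  | wnext : LTLF PL → LTLF PL               -- wX φ
  | untl : LTLF PL → LTLF PL → LTLF PL      -- φ U ψ
  | rel : LTLF PL → LTLF PL → LTLF PL       -- φ R ψ

/-- Satisfaction of an LTL formula by a word given as `σ : ℕ → Set PL`
together with a length `L : ℕ∞` (`⊤` for infinite words), at position `i`. -/
def Sat {PL : Type} (σ : ℕ → Set PL) (L : ℕ∞) : LTLF PL → ℕ → Prop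
  | .pos p, i => p ∈ σ i
  | .nneg p, i => p ∉ σ i
  | .disj φ ψ, i => Sat σ L φ i ∨ Sat σ L ψ i
  | .conj φ ψ, i => Sat σ L φ i ∧ Sat σ L ψ i
  | .next φ, i => ((i + 1 : ℕ) : ℕ∞) < L ∧ Sat σ L φ (i + 1)
  | .wnext φ, i => ((i + 1 : ℕ) : ℕ∞) = L ∨ Sat σ L φ (i + 1)
  | .untl φ ψ, i => ∃ j : ℕ, i ≤ j ∧ (j : ℕ∞) < L ∧ Sat σ L ψ j ∧
      ∀ k : ℕ, i ≤ k → k < j → Sat σ L φ k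
  | .rel φ ψ, i =>
      (∀ j : ℕ, i ≤ j → (j : ℕ∞) < L → Sat σ L ψ j) ∨
      (∃ k : ℕ, i ≤ k ∧ (k : ℕ∞) < L ∧ Sat σ L φ k ∧
        ∀ j : ℕ, i ≤ j → j ≤ k → Sat σ L ψ j)

/-- The function `ℕ → Set PL` associated with a finite word (a list of letters). -/
def wordOf {PL : Type} (xs : List (Set PL)) : ℕ → Set PL := fun n => xs.getD n ∅

/-- Satisfaction over a finite word. -/
def FinSat {PL : Type} (xs : List (Set PL)) (φ : LTLF PL) (i : ℕ) : Prop :=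
  Sat (wordOf xs) (xs.length : ℕ∞) φ i

/-- `L_fin(φ)`: the nonempty finite words satisfying `φ` (at position 0). -/
def LfinL {PL : Type} (φ : LTLF PL) : Set (List (Set PL)) :=
  {xs | xs ≠ [] ∧ FinSat xs φ 0}

/-- `L(φ)`: the infinite words satisfying `φ` (at position 0). -/
def LinfL {PL : Type} (φ : LTLF PL) : Set (ℕ → Set PL) :=
  {σ | Sat σ ⊤ φ 0}

/-- `L·(2^Σ)^*` : concatenation of a language of finite words with all finite words. -/
def catFin {PL : Type} (Lg : Set (List (Set PL))) : Set (List (Set PL)) :=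
  {w | ∃ u ∈ Lg, ∃ v : List (Set PL), w = u ++ v}

/-- Concatenation of a finite word with an infinite word. -/
def listConc {PL : Type} (u : List (Set PL)) (v : ℕ → Set PL) : ℕ → Set PL :=
  fun n => if n < u.length then wordOf u n else v (n - u.length)

/-- `L·(2^Σ)^ω` : concatenation of a language of finite words with all infinite words. -/
def catInf {PL : Type} (Lg : Set (List (Set PL))) : Set (ℕ → Set PL) :=
  {w | ∃ u ∈ Lg, ∃ v : ℕ → Set PL, w = listConc u v}

/-- The prefix `σ_[0,i]` of an infinite word, as a list. -/
def prefixList {PL : Type} (σ : ℕ → Set PL) (i : ℕ) : List (Set PL) :=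
  (List.range (i + 1)).map σ

/-- co-safety ω-languages. -/
def IsCoSafetyLang {PL : Type} (Lg : Set (ℕ → Set PL)) : Prop :=
  ∀ σ ∈ Lg, ∃ i : ℕ, ∀ σ' : ℕ → Set PL, listConc (prefixList σ i) σ' ∈ Lg

/-- safety ω-languages. -/
def IsSafetyLang {PL : Type} (Lg : Set (ℕ → Set PL)) : Prop :=
  ∀ σ : ℕ → Set PL, σ ∉ Lg → ∃ i : ℕ, ∀ σ' : ℕ → Set PL, listConc (prefixList σ i) σ' ∉ Lg

/-- co-safety languages of finite words. -/
def IsCoSafetyLangFin {PL : Type} (Lg : Set (List (Set PL))) : Prop :=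
  (∀ σ ∈ Lg, σ ≠ []) ∧
  ∀ σ ∈ Lg, ∃ i < σ.length, ∀ σ' : List (Set PL), σ.take (i + 1) ++ σ' ∈ Lg

/-- safety languages of finite words. -/
def IsSafetyLangFin {PL : Type} (Lg : Set (List (Set PL))) : Prop :=
  (∀ σ ∈ Lg, σ ≠ []) ∧
  ∀ σ : List (Set PL), σ ≠ [] → σ ∉ Lg →
    ∃ i < σ.length, ∀ σ' : List (Set PL), σ.take (i + 1) ++ σ' ∉ Lg

/-- coSafetyLTL: only X, wX and U as temporal operators. -/
inductive CoSafetyLTL {PL : Type} : LTLF PL → Prop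
  | pos (p : PL) : CoSafetyLTL (.pos p)
  | nneg (p : PL) : CoSafetyLTL (.nneg p)
  | disj {φ ψ : LTLF PL} : CoSafetyLTL φ → CoSafetyLTL ψ → CoSafetyLTL (.disj φ ψ)
  | conj {φ ψ : LTLF PL} : CoSafetyLTL φ → CoSafetyLTL ψ → CoSafetyLTL (.conj φ ψ)
  | next {φ : LTLF PL} : CoSafetyLTL φ → CoSafetyLTL (.next φ)
  | wnext {φ : LTLF PL} : CoSafetyLTL φ → CoSafetyLTL (.wnext φ)
  | untl {φ ψ : LTLF PL} : CoSafetyLTL φ → CoSafetyLTL ψ → CoSafetyLTL (.untl φ ψ)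

/-- coSafetyLTL without the weak tomorrow operator: only X and U. -/
inductive CoSafetyLTLnoW {PL : Type} : LTLF PL → Prop
  | pos (p : PL) : CoSafetyLTLnoW (.pos p)
  | nneg (p : PL) : CoSafetyLTLnoW (.nneg p)
  | disj {φ ψ : LTLF PL} : CoSafetyLTLnoW φ → CoSafetyLTLnoW ψ → CoSafetyLTLnoW (.disj φ ψ)
  | conj {φ ψ : LTLF PL} : CoSafetyLTLnoW φ → CoSafetyLTLnoW ψ → CoSafetyLTLnoW (.conj φ ψ)
  | next {φ : LTLF PL} : CoSafetyLTLnoW φ → CoSafetyLTLnoW (.next φ)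
  | untl {φ ψ : LTLF PL} : CoSafetyLTLnoW φ → CoSafetyLTLnoW ψ → CoSafetyLTLnoW (.untl φ ψ)

/-- SafetyLTL: only X, wX and R as temporal operators. -/
inductive SafetyLTL {PL : Type} : LTLF PL → Prop
  | pos (p : PL) : SafetyLTL (.pos p)
  | nneg (p : PL) : SafetyLTL (.nneg p)
  | disj {φ ψ : LTLF PL} : SafetyLTL φ → SafetyLTL ψ → SafetyLTL (.disj φ ψ)
  | conj {φ ψ : LTLF PL} : SafetyLTL φ → SafetyLTL ψ → SafetyLTL (.conj φ ψ)
  | next {φ : LTLF PL} : SafetyLTL φ → SafetyLTL (.next φ)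
  | wnext {φ : LTLF PL} : SafetyLTL φ → SafetyLTL (.wnext φ)
  | rel {φ ψ : LTLF PL} : SafetyLTL φ → SafetyLTL ψ → SafetyLTL (.rel φ ψ)

/-- SafetyLTL without the tomorrow operator: only wX and R. -/
inductive SafetyLTLnoX {PL : Type} : LTLF PL → Prop
  | pos (p : PL) : SafetyLTLnoX (.pos p)
  | nneg (p : PL) : SafetyLTLnoX (.nneg p)
  | disj {φ ψ : LTLF PL} : SafetyLTLnoX φ → SafetyLTLnoX ψ → SafetyLTLnoX (.disj φ ψ)
  | conj {φ ψ : LTLF PL} : SafetyLTLnoX φ → SafetyLTLnoX ψ → SafetyLTLnoX (.conj φ ψ)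
  | wnext {φ : LTLF PL} : SafetyLTLnoX φ → SafetyLTLnoX (.wnext φ)
  | rel {φ ψ : LTLF PL} : SafetyLTLnoX φ → SafetyLTLnoX ψ → SafetyLTLnoX (.rel φ ψ)

/-- First-order formulas over words: signature `<`, `=`, and a unary predicate
for each proposition letter; variables are natural numbers. -/
inductive FOW (PL : Type) : Type
  | lt : ℕ → ℕ → FOW PL
  | eq : ℕ → ℕ → FOW PL
  | pred : PL → ℕ → FOW PL
  | not : FOW PL → FOW PL
  | disj : FOW PL → FOW PL → FOW PL
  | conj : FOW PL → FOW PL → FOW PL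
  | ex : ℕ → FOW PL → FOW PL
  | all : ℕ → FOW PL → FOW PL

/-- First-order satisfaction over a word `σ` with length `L : ℕ∞` (`⊤` for
infinite words) under a valuation `v` of the variables into positions. -/
def FOSat {PL : Type} (σ : ℕ → Set PL) (L : ℕ∞) : FOW PL → (ℕ → ℕ) → Prop
  | .lt x y, v => v x < v y
  | .eq x y, v => v x = v y
  | .pred p x, v => p ∈ σ (v x)
  | .not φ, v => ¬ FOSat σ L φ v
  | .disj φ ψ, v => FOSat σ L φ v ∨ FOSat σ L ψ v
  | .conj φ ψ, v => FOSat σ L φ v ∧ FOSat σ L ψ v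
  | .ex x φ, v => ∃ n : ℕ, (n : ℕ∞) < L ∧ FOSat σ L φ (Function.update v x n)
  | .all x φ, v => ∀ n : ℕ, (n : ℕ∞) < L → FOSat σ L φ (Function.update v x n)

/-- Free variables of a first-order formula. -/
def FOW.free {PL : Type} : FOW PL → Finset ℕ
  | .lt x y => {x, y}
  | .eq x y => {x, y}
  | .pred _ x => {x}
  | .not φ => φ.free
  | .disj φ ψ => φ.free ∪ ψ.free
  | .conj φ ψ => φ.free ∪ ψ.free
  | .ex x φ => φ.free.erase x
  | .all x φ => φ.free.erase x

/-- `φ → ψ` as an abbreviation. -/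
def FOW.impl {PL : Type} (φ ψ : FOW PL) : FOW PL := .disj (.not φ) ψ

/-- `y ≤ x` as an abbreviation. -/
def FOW.le {PL : Type} (y x : ℕ) : FOW PL := .disj (.lt y x) (.eq y x)

/-- The coSafetyFO fragment:
`φ ::= x<y | x=y | x≠y | P(x) | ¬P(x) | φ∨φ | φ∧φ | ∃y(x<y ∧ φ) | ∀y(x<y<z → φ)`. -/
inductive CoSafetyFO {PL : Type} : FOW PL → Prop
  | lt (x y : ℕ) : CoSafetyFO (.lt x y)
  | eq (x y : ℕ) : CoSafetyFO (.eq x y)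
  | ne (x y : ℕ) : CoSafetyFO (.not (.eq x y))
  | pred (p : PL) (x : ℕ) : CoSafetyFO (.pred p x)
  | npred (p : PL) (x : ℕ) : CoSafetyFO (.not (.pred p x))
  | disj {φ ψ : FOW PL} : CoSafetyFO φ → CoSafetyFO ψ → CoSafetyFO (.disj φ ψ)
  | conj {φ ψ : FOW PL} : CoSafetyFO φ → CoSafetyFO ψ → CoSafetyFO (.conj φ ψ)
  | ex (x y : ℕ) {φ : FOW PL} : CoSafetyFO φ →
      CoSafetyFO (.ex y (.conj (.lt x y) φ))
  | all (x y z : ℕ) {φ : FOW PL} : CoSafetyFO φ →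
      CoSafetyFO (.all y (FOW.impl (.conj (.lt x y) (.lt y z)) φ))

/-- The SafetyFO fragment:
`φ ::= x<y | x=y | x≠y | P(x) | ¬P(x) | φ∨φ | φ∧φ | ∃y(x<y<z ∧ φ) | ∀y(x<y → φ)`. -/
inductive SafetyFO {PL : Type} : FOW PL → Prop
  | lt (x y : ℕ) : SafetyFO (.lt x y)
  | eq (x y : ℕ) : SafetyFO (.eq x y)
  | ne (x y : ℕ) : SafetyFO (.not (.eq x y))
  | pred (p : PL) (x : ℕ) : SafetyFO (.pred p x)
  | npred (p : PL) (x : ℕ) : SafetyFO (.not (.pred p x))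
  | disj {φ ψ : FOW PL} : SafetyFO φ → SafetyFO ψ → SafetyFO (.disj φ ψ)
  | conj {φ ψ : FOW PL} : SafetyFO φ → SafetyFO ψ → SafetyFO (.conj φ ψ)
  | ex (x y z : ℕ) {φ : FOW PL} : SafetyFO φ →
      SafetyFO (.ex y (.conj (.conj (.lt x y) (.lt y z)) φ))
  | all (x y : ℕ) {φ : FOW PL} : SafetyFO φ →
      SafetyFO (.all y (FOW.impl (.lt x y) φ))

/-- A formula has exactly one free variable. -/
def HasOneFree {PL : Type} (φ : FOW PL) : Prop := ∃ x : ℕ, φ.free = {x}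

/-- `L_fin(φ(x))` for a first-order formula with (exactly one) free variable:
nonempty finite words that satisfy it with the free variable interpreted as `0`. -/
def LfinFO {PL : Type} (φ : FOW PL) : Set (List (Set PL)) :=
  {xs | xs ≠ [] ∧ FOSat (wordOf xs) (xs.length : ℕ∞) φ (fun _ => 0)}

/-- `L(φ(x))` for a first-order formula with (exactly one) free variable:
infinite words that satisfy it with the free variable interpreted as `0`. -/
def LinfFO {PL : Type} (φ : FOW PL) : Set (ℕ → Set PL) :=
  {σ | FOSat σ ⊤ φ (fun _ => 0)}

/-- `⟦coSafetyFO⟧_fin`. -/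
def CoSafetyFOFin (PL : Type) : Set (Set (List (Set PL))) :=
  {Lg | ∃ φ : FOW PL, CoSafetyFO φ ∧ HasOneFree φ ∧ Lg = LfinFO φ}

/-- `⟦coSafetyFO⟧`. -/
def CoSafetyFOInf (PL : Type) : Set (Set (ℕ → Set PL)) :=
  {Lg | ∃ φ : FOW PL, CoSafetyFO φ ∧ HasOneFree φ ∧ Lg = LinfFO φ}

/-- `⟦SafetyFO⟧_fin`. -/
def SafetyFOFin (PL : Type) : Set (Set (List (Set PL))) :=
  {Lg | ∃ φ : FOW PL, SafetyFO φ ∧ HasOneFree φ ∧ Lg = LfinFO φ}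

/-- `⟦FO⟧_fin` (formulas with exactly one free variable). -/
def FOFin (PL : Type) : Set (Set (List (Set PL))) :=
  {Lg | ∃ φ : FOW PL, HasOneFree φ ∧ Lg = LfinFO φ}

/-- `⟦coSafetyLTL⟧_fin`. -/
def CoSafetyLTLFin (PL : Type) : Set (Set (List (Set PL))) :=
  {Lg | ∃ φ : LTLF PL, CoSafetyLTL φ ∧ Lg = LfinL φ}

/-- `⟦coSafetyLTL\{wX}⟧_fin`. -/
def CoSafetyLTLnoWFin (PL : Type) : Set (Set (List (Set PL))) :=
  {Lg | ∃ φ : LTLF PL, CoSafetyLTLnoW φ ∧ Lg = LfinL φ}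

/-- `⟦SafetyLTL⟧_fin`. -/
def SafetyLTLFin (PL : Type) : Set (Set (List (Set PL))) :=
  {Lg | ∃ φ : LTLF PL, SafetyLTL φ ∧ Lg = LfinL φ}

/-- `⟦SafetyLTL\{X}⟧_fin`. -/
def SafetyLTLnoXFin (PL : Type) : Set (Set (List (Set PL))) :=
  {Lg | ∃ φ : LTLF PL, SafetyLTLnoX φ ∧ Lg = LfinL φ}

/-- `⟦LTL⟧_fin`. -/
def LTLFin (PL : Type) : Set (Set (List (Set PL))) :=
  {Lg | ∃ φ : LTLF PL, Lg = LfinL φ}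

/-- `⟦LTL⟧`. -/
def LTLInf (PL : Type) : Set (Set (ℕ → Set PL)) :=
  {Lg | ∃ φ : LTLF PL, Lg = LinfL φ}

/-- `⟦coSafetyLTL⟧`. -/
def CoSafetyLTLInf (PL : Type) : Set (Set (ℕ → Set PL)) :=
  {Lg | ∃ φ : LTLF PL, CoSafetyLTL φ ∧ Lg = LinfL φ}

/-- `⟦SafetyLTL⟧`. -/
def SafetyLTLInf (PL : Type) : Set (Set (ℕ → Set PL)) :=
  {Lg | ∃ φ : LTLF PL, SafetyLTL φ ∧ Lg = LinfL φ}

/-- Quantifier-free first-order formulas in one (implicit) variable, i.e.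
boolean combinations of the atoms `P(x)`, `x=x`, `x<x`. -/
inductive QF (PL : Type) : Type
  | tru : QF PL
  | fls : QF PL
  | pos : PL → QF PL
  | qnot : QF PL → QF PL
  | qor : QF PL → QF PL → QF PL
  | qand : QF PL → QF PL → QF PL

/-- Evaluation of a quantifier-free one-variable formula at a letter. -/
def QF.sat {PL : Type} (s : Set PL) : QF PL → Prop
  | .tru => True
  | .fls => False
  | .pos p => p ∈ s
  | .qnot φ => ¬ QF.sat s φ
  | .qor φ ψ => QF.sat s φ ∨ QF.sat s ψ
  | .qand φ ψ => QF.sat s φ ∧ QF.sat s ψ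

/-- An ∃-formula with free variables `z₀,…,z_m`:
`∃x₀…∃x_n (x₀<⋯<x_n ∧ z₀=x₀ ∧ ⋀ z_k=x_{i_k} ∧ ⋀ α_j(x_j) ∧ ⋀ ∀y(x_{j−1}<y<x_j → β_j(y)))`. -/
structure ExForm (PL : Type) (m : ℕ) where
  n : ℕ
  bind : Fin m → Fin (n + 1)
  alpha : Fin (n + 1) → QF PL
  beta : Fin n → QF PL

/-- Satisfaction of an ∃-formula on the word `σ` of length `L` (`⊤` if infinite),
where `z : Fin (m+1) → ℕ` interprets the free variables `z₀,…,z_m`. -/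
def ExForm.ESat {PL : Type} {m : ℕ} (e : ExForm PL m) (σ : ℕ → Set PL) (L : ℕ∞)
    (z : Fin (m + 1) → ℕ) : Prop :=
  ∃ x : Fin (e.n + 1) → ℕ,
    StrictMono x ∧
    (∀ j : Fin (e.n + 1), ((x j : ℕ) : ℕ∞) < L) ∧
    z 0 = x 0 ∧
    (∀ k : Fin m, z k.succ = x (e.bind k)) ∧
    (∀ j : Fin (e.n + 1), (e.alpha j).sat (σ (x j))) ∧
    (∀ j : Fin e.n, ∀ y : ℕ, x j.castSucc < y → y < x j.succ → (e.beta j).sat (σ y))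

/-- Satisfaction of a disjunction of ∃-formulas. -/
def DisjESat {PL : Type} {m : ℕ} (ds : List (ExForm PL m)) (σ : ℕ → Set PL) (L : ℕ∞)
    (z : Fin (m + 1) → ℕ) : Prop :=
  ∃ e ∈ ds, ExForm.ESat e σ L z

/-- Size (number of symbols) of an LTL formula. -/
def LTLF.size {PL : Type} : LTLF PL → ℕ
  | .pos _ => 1
  | .nneg _ => 2
  | .disj φ ψ => φ.size + ψ.size + 1
  | .conj φ ψ => φ.size + ψ.size + 1
  | .next φ => φ.size + 1
  | .wnext φ => φ.size + 1
  | .untl φ ψ => φ.size + ψ.size + 1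
  | .rel φ ψ => φ.size + ψ.size + 1

/-- Size (number of symbols) of a first-order formula. -/
def FOW.size {PL : Type} : FOW PL → ℕ
  | .lt _ _ => 3
  | .eq _ _ => 3
  | .pred _ _ => 2
  | .not φ => φ.size + 1
  | .disj φ ψ => φ.size + ψ.size + 1
  | .conj φ ψ => φ.size + ψ.size + 1
  | .ex _ φ => φ.size + 2
  | .all _ φ => φ.size + 2

/-- Bounded formulas relative to a variable `x`: every quantifier is of the form
`∃y(y ≤ x ∧ …)` or `∀y(y ≤ x → …)`. -/
inductive BoundedBy {PL : Type} (x : ℕ) : FOW PL → Prop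
  | lt (a b : ℕ) : BoundedBy x (.lt a b)
  | eq (a b : ℕ) : BoundedBy x (.eq a b)
  | pred (p : PL) (a : ℕ) : BoundedBy x (.pred p a)
  | not {φ : FOW PL} : BoundedBy x φ → BoundedBy x (.not φ)
  | disj {φ ψ : FOW PL} : BoundedBy x φ → BoundedBy x ψ → BoundedBy x (.disj φ ψ)
  | conj {φ ψ : FOW PL} : BoundedBy x φ → BoundedBy x ψ → BoundedBy x (.conj φ ψ)
  | ex (y : ℕ) {φ : FOW PL} : BoundedBy x φ →
      BoundedBy x (.ex y (.conj (FOW.le y x) φ))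
  | all (y : ℕ) {φ : FOW PL} : BoundedBy x φ →
      BoundedBy x (.all y (FOW.impl (FOW.le y x) φ))

/-- EBFO sentences: `∃x.φ(x)` with `φ(x)` bounded and with exactly one free variable `x`. -/
def IsEBFO {PL : Type} (ψ : FOW PL) : Prop :=
  ∃ (x : ℕ) (φ : FOW PL), ψ = .ex x φ ∧ BoundedBy x φ ∧ φ.free = {x}

/-- The ω-language of a sentence (the valuation is irrelevant). -/
def LinfSent {PL : Type} (ψ : FOW PL) : Set (ℕ → Set PL) :=
  {σ | FOSat σ ⊤ ψ (fun _ => 0)}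

end CoSafetyPaper

/-! The universal quantifiers of coSafetyFO are bounded above by an already interpreted
variable. Hence, by induction on the formula, whenever a coSafetyFO formula holds on a word,
some finite prefix of the word forces it on every extension of that prefix, finite or
infinite. For a finite model this prefix lies inside the model, which
gives `L_fin(φ)·(2^Σ)^* ⊆ L_fin(φ)` and `L_fin(φ)·(2^Σ)^ω ⊆ L(φ)`; for an infinite model it is
a finite model of `φ`, which gives `L(φ) ⊆ L_fin(φ)·(2^Σ)^ω`. -/

namespace CoSafetyPaper

variable {PL : Type}

def PrefixForces (σ : ℕ → Set PL) (N : ℕ) (φ : FOW PL) (v : ℕ → ℕ) : Prop :=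
  ∀ (σ' : ℕ → Set PL) (L : ℕ∞), (N : ℕ∞) ≤ L → (∀ n < N, σ' n = σ n) → FOSat σ' L φ v

theorem PrefixForces.mono {σ : ℕ → Set PL} {N M : ℕ} {φ : FOW PL} {v : ℕ → ℕ}
    (h : PrefixForces σ N φ v) (hNM : N ≤ M) : PrefixForces σ M φ v :=
  fun σ' L hML hagree =>
    h σ' L ((Nat.cast_le.2 hNM).trans hML) fun n hn => hagree n (hn.trans_le hNM)

theorem natCast_succ_le_of_lt {n : ℕ} {L : ℕ∞} (h : (n : ℕ∞) < L) :
    ((n + 1 : ℕ) : ℕ∞) ≤ L := by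
  simpa using Order.add_one_le_of_lt h

theorem forall_update_lt {s : Finset ℕ} {v : ℕ → ℕ} {y n : ℕ} {L : ℕ∞}
    (hv : ∀ w ∈ s.erase y, (v w : ℕ∞) < L) (hn : (n : ℕ∞) < L) :
    ∀ w ∈ s, (Function.update v y n w : ℕ∞) < L := by
  intro w hw
  rcases eq_or_ne w y with rfl | hwy
  · simpa using hn
  · rw [Function.update_of_ne hwy]
    exact hv w (Finset.mem_erase.2 ⟨hwy, hw⟩)

theorem ne_and_lt_of_update_lt {v : ℕ → ℕ} {y n z : ℕ}
    (h : Function.update v y n y < Function.update v y n z) : z ≠ y ∧ n < v z := by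
  have hzy : z ≠ y := by rintro rfl; exact lt_irrefl _ h
  rw [Function.update_self, Function.update_of_ne hzy] at h
  exact ⟨hzy, h⟩

theorem natCast_max_le {a b : ℕ} {L : ℕ∞} (ha : (a : ℕ∞) ≤ L) (hb : (b : ℕ∞) ≤ L) :
    ((max a b : ℕ) : ℕ∞) ≤ L := by
  rw [Nat.mono_cast.map_max]
  exact max_le ha hb

/- Only the finitely many `n < v z` pass the guard, so the maximum of their forcing prefixes
forces the whole formula. -/
theorem exists_prefixForces_all {σ : ℕ → Set PL} {L : ℕ∞} {x y z : ℕ} {ψ : FOW PL}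
    {v : ℕ → ℕ}
    (h : ∀ n : ℕ, Function.update v y n x < Function.update v y n y →
      Function.update v y n y < Function.update v y n z →
      ∃ N : ℕ, (N : ℕ∞) ≤ L ∧ PrefixForces σ N ψ (Function.update v y n)) :
    ∃ N : ℕ, (N : ℕ∞) ≤ L ∧
      PrefixForces σ N (.all y (FOW.impl (.conj (.lt x y) (.lt y z)) ψ)) v := by
  have witness (n : ℕ) : ∃ N : ℕ, (N : ℕ∞) ≤ L ∧
      (Function.update v y n x < Function.update v y n y →
        Function.update v y n y < Function.update v y n z →
        PrefixForces σ N ψ (Function.update v y n)) := by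
    by_cases hg : Function.update v y n x < Function.update v y n y ∧
        Function.update v y n y < Function.update v y n z
    · obtain ⟨N, hNL, hN⟩ := h n hg.1 hg.2
      exact ⟨N, hNL, fun _ _ => hN⟩
    · exact ⟨0, bot_le, fun hxy hyz => absurd ⟨hxy, hyz⟩ hg⟩
  choose Nf hNfL hNf using witness
  refine ⟨(Finset.range (v z)).sup Nf, ?_, fun σ' L' hL' hagree n _ => ?_⟩
  · exact Finset.sup_induction (p := fun N : ℕ => (N : ℕ∞) ≤ L) bot_le
      (fun _ ha _ hb => natCast_max_le ha hb) fun n _ => hNfL n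
  · by_cases hg : Function.update v y n x < Function.update v y n y ∧
        Function.update v y n y < Function.update v y n z
    · have hnz := (ne_and_lt_of_update_lt hg.2).2
      refine Or.inr ((hNf n hg.1 hg.2).mono ?_ σ' L' hL' hagree)
      exact Finset.le_sup (Finset.mem_range.2 hnz)
    · exact Or.inl hg

theorem CoSafetyFO.exists_prefixForces {φ : FOW PL} (hφ : CoSafetyFO φ)
    {σ : ℕ → Set PL} {L : ℕ∞} {v : ℕ → ℕ}
    (hv : ∀ x ∈ φ.free, (v x : ℕ∞) < L) (h : FOSat σ L φ v) :
    ∃ N : ℕ, (N : ℕ∞) ≤ L ∧ PrefixForces σ N φ v := by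
  induction hφ generalizing v with
  | lt | eq | ne => exact ⟨0, bot_le, fun _ _ _ _ => h⟩
  | pred p x | npred p x =>
    refine ⟨v x + 1, natCast_succ_le_of_lt (hv x (by simp [FOW.free])),
      fun σ' _ _ hagree => ?_⟩
    simp only [FOSat] at h ⊢
    rwa [hagree (v x) (Nat.lt_succ_self _)]
  | disj _ _ ihφ ihψ =>
    rcases h with h | h
    · obtain ⟨N, hNL, hN⟩ := ihφ (fun x hx => hv x (Finset.mem_union_left _ hx)) h
      exact ⟨N, hNL, fun σ' L' hL' hagree => Or.inl (hN σ' L' hL' hagree)⟩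
    · obtain ⟨N, hNL, hN⟩ := ihψ (fun x hx => hv x (Finset.mem_union_right _ hx)) h
      exact ⟨N, hNL, fun σ' L' hL' hagree => Or.inr (hN σ' L' hL' hagree)⟩
  | conj _ _ ihφ ihψ =>
    obtain ⟨N₁, hN₁L, hN₁⟩ := ihφ (fun x hx => hv x (Finset.mem_union_left _ hx)) h.1
    obtain ⟨N₂, hN₂L, hN₂⟩ := ihψ (fun x hx => hv x (Finset.mem_union_right _ hx)) h.2
    exact ⟨max N₁ N₂, natCast_max_le hN₁L hN₂L, fun σ' L' hL' hagree =>
      ⟨hN₁.mono (le_max_left _ _) σ' L' hL' hagree,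
        hN₂.mono (le_max_right _ _) σ' L' hL' hagree⟩⟩
  | ex x y _ ih =>
    obtain ⟨n, hnL, hxn, hφn⟩ := h
    obtain ⟨N, hNL, hN⟩ := ih (forall_update_lt (fun w hw =>
      hv w (Finset.erase_subset_erase _ Finset.subset_union_right hw)) hnL) hφn
    refine ⟨max N (n + 1), natCast_max_le hNL (natCast_succ_le_of_lt hnL),
      fun σ' L' hL' hagree => ⟨n, ?_, hxn, hN.mono (le_max_left _ _) σ' L' hL' hagree⟩⟩
    exact lt_of_lt_of_le (by exact_mod_cast Nat.lt_of_succ_le (le_max_right N (n + 1))) hL'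
  | all x y z _ ih =>
    refine exists_prefixForces_all fun n hxy hyz => ?_
    obtain ⟨hzy, hnz⟩ := ne_and_lt_of_update_lt hyz
    have hnL : (n : ℕ∞) < L :=
      lt_trans (by exact_mod_cast hnz) (hv z (by simp [FOW.free, FOW.impl, hzy]))
    exact ih (forall_update_lt (fun w hw =>
      hv w (Finset.erase_subset_erase _ Finset.subset_union_right hw)) hnL)
      ((h n hnL).resolve_left (not_not_intro ⟨hxy, hyz⟩))

theorem CoSafetyFO.exists_prefixForces_of_mem_LfinFO {φ : FOW PL} (hφ : CoSafetyFO φ)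
    {u : List (Set PL)} (hu : u ∈ LfinFO φ) :
    ∃ N ≤ u.length, PrefixForces (wordOf u) N φ (fun _ => 0) := by
  obtain ⟨N, hN, hforce⟩ := hφ.exists_prefixForces
    (fun _ _ => by exact_mod_cast List.length_pos_iff.2 hu.1) hu.2
  exact ⟨N, by exact_mod_cast hN, hforce⟩

theorem wordOf_append_of_lt {u w : List (Set PL)} {n : ℕ} (h : n < u.length) :
    wordOf (u ++ w) n = wordOf u n := by
  simp [wordOf, List.getD_eq_getElem?_getD, List.getElem?_append_left h]

theorem listConc_of_lt {u : List (Set PL)} {w : ℕ → Set PL} {n : ℕ} (h : n < u.length) :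
    listConc u w n = wordOf u n :=
  if_pos h

theorem wordOf_map_range {σ : ℕ → Set PL} {N n : ℕ} (h : n < N) :
    wordOf ((List.range N).map σ) n = σ n := by
  simp [wordOf, List.getD_eq_getElem?_getD, h]

theorem listConc_map_range (σ : ℕ → Set PL) (N : ℕ) :
    listConc ((List.range N).map σ) (fun k => σ (k + N)) = σ := by
  funext n
  by_cases hn : n < N
  · simp [listConc, hn, wordOf_map_range hn]
  · simp [listConc, hn, Nat.sub_add_cancel (not_lt.1 hn)]

theorem CoSafetyFO.LfinFO_eq_catFin {φ : FOW PL} (hφ : CoSafetyFO φ) :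
    LfinFO φ = catFin (LfinFO φ) := by
  refine subset_antisymm (fun u hu => ⟨u, hu, [], (List.append_nil u).symm⟩) ?_
  rintro _ ⟨u, hu, w, rfl⟩
  obtain ⟨N, hN, hforce⟩ := hφ.exists_prefixForces_of_mem_LfinFO hu
  refine ⟨by simp [hu.1], hforce _ _ ?_ fun n hn => wordOf_append_of_lt (hn.trans_le hN)⟩
  exact_mod_cast hN.trans (by simp)

theorem CoSafetyFO.LinfFO_eq_catInf {φ : FOW PL} (hφ : CoSafetyFO φ) :
    LinfFO φ = catInf (LfinFO φ) := by
  refine subset_antisymm (fun σ hσ => ?_) ?_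
  · obtain ⟨N, -, hforce⟩ := hφ.exists_prefixForces (fun _ _ => ENat.natCast_lt_top 0) hσ
    -- `max N 1` keeps the prefix nonempty, as `L_fin` demands
    refine ⟨(List.range (max N 1)).map σ, ⟨?_, ?_⟩, _, (listConc_map_range σ _).symm⟩
    · simp
    · exact hforce.mono (le_max_left _ _) _ _ (by simp) fun n hn => wordOf_map_range hn
  · rintro _ ⟨u, hu, w, rfl⟩
    obtain ⟨N, hN, hforce⟩ := hφ.exists_prefixForces_of_mem_LfinFO hu
    exact hforce _ ⊤ le_top fun n hn => listConc_of_lt (hn.trans_le hN)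

end CoSafetyPaper

open CoSafetyPaper in
theorem cosafetyFO_insensitive_general (PL : Type) :
    (∀ φ : FOW PL, CoSafetyFO φ → HasOneFree φ →
      LfinFO φ = catFin (LfinFO φ) ∧ LinfFO φ = catInf (LfinFO φ))
    ∧ CoSafetyFOFin PL = catFin '' CoSafetyFOFin PL
    ∧ CoSafetyFOInf PL = catInf '' CoSafetyFOFin PL := by
  refine ⟨fun φ hφ _ => ⟨hφ.LfinFO_eq_catFin, hφ.LinfFO_eq_catInf⟩, ?_, ?_⟩
  · refine (Set.EqOn.image_eq_self ?_).symm
    rintro _ ⟨φ, hφ, -, rfl⟩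
    exact hφ.LfinFO_eq_catFin.symm
  · ext Lg
    constructor
    · rintro ⟨φ, hφ, hone, rfl⟩
      exact ⟨LfinFO φ, ⟨φ, hφ, hone, rfl⟩, hφ.LinfFO_eq_catInf.symm⟩
    · rintro ⟨_, ⟨φ, hφ, hone, rfl⟩, rfl⟩
      exact ⟨φ, hφ, hone, hφ.LinfFO_eq_catInf.symm⟩

open CoSafetyPaper in
/-- For every coSafetyFO formula φ(x) with exactly one free
variable, `L_fin(φ(x)) = L_fin(φ(x))·(2^Σ)^*` and
`L(φ(x)) = L_fin(φ(x))·(2^Σ)^ω`; consequently the corresponding identities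
hold at the level of the classes of definable languages. -/
theorem cosafetyFO_insensitive (PL : Type) [Fintype PL] :
    (∀ φ : FOW PL, CoSafetyFO φ → HasOneFree φ →
      LfinFO φ = catFin (LfinFO φ) ∧ LinfFO φ = catInf (LfinFO φ))
    ∧ CoSafetyFOFin PL = catFin '' CoSafetyFOFin PL
    ∧ CoSafetyFOInf PL = catInf '' CoSafetyFOFin PL :=
  cosafetyFO_insensitive_general PL
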